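/- arXiv:2307.15415 — 2 statements merged into one kernel-verified Lean document; each statement's English description precedes it below -/
import Mathlib

section
/- Let α > −1, n ≥ 1, λ_n^L = m(n)/m(n−1), and suppose m(j)/m(j−1) ≠ m(n)/m(n−1) for 1 ≤ j ≤ n−1. If y(x) = ∑_{p≥0} (a_p/m(p)) x^p is a formal power series solution of x ∂_m² y + (α+1−x) ∂_m y + λ_n^L y = 0, then the coefficients satisfy (α+1) a_1 = −λ_n^L a_0 and a_{p+1}/m(p+1) = [ (m(p)/m(p+1)) · (m(p)/m(p−1) − λ_n^L) / (m(p)/m(p−1) + α + 1) ] · a_p/m(p) for p ≥ 1; consequently a_j = 0 for all j ≥ n+1, so y is a polynomial of degree at most n. -/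
/-!
Writing `y = ∑ b_p x^p` and `r_p = m(p)/m(p-1)`, the coefficient of `x^p` in the equation reads
`(r_p + α + 1) r_{p+1} b_{p+1} = (r_p - λ) b_p` (with `r_0` replaced by `0`). Since `r_p > 0` and
`α > -1` the factor on the left never vanishes, so this is a first order recurrence for `b`; its
factor `r_p - λ` vanishes at `p = n`, so every coefficient beyond `n` is zero.
-/

open PowerSeries

/-- The moment derivative associated to a sequence `m`. -/
noncomputable def mderiv (m : ℕ → ℝ) (f : PowerSeries ℂ) : PowerSeries ℂ :=
  PowerSeries.mk fun p => ((m (p + 1) / m p : ℝ) : ℂ) * PowerSeries.coeff (p + 1) f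

noncomputable def laguerreOp (m : ℕ → ℝ) (c l : ℂ) (f : PowerSeries ℂ) : PowerSeries ℂ :=
  X * mderiv m (mderiv m f) + (C c - X) * mderiv m f + C l * f

section Coefficients

variable (m : ℕ → ℝ) (c l : ℂ) (f : PowerSeries ℂ)

theorem coeff_mderiv (p : ℕ) :
    coeff p (mderiv m f) = ((m (p + 1) / m p : ℝ) : ℂ) * coeff (p + 1) f := by
  simp [mderiv]

theorem coeff_zero_laguerreOp :
    coeff 0 (laguerreOp m c l f) = c * ((m 1 / m 0 : ℝ) : ℂ) * coeff 1 f + l * coeff 0 f := by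
  simp only [laguerreOp, map_add, sub_mul, map_sub, coeff_C_mul, coeff_zero_X_mul, coeff_mderiv]
  ring

theorem coeff_succ_laguerreOp (p : ℕ) :
    coeff (p + 1) (laguerreOp m c l f) =
      (((m (p + 1) / m p : ℝ) : ℂ) + c) * ((m (p + 2) / m (p + 1) : ℝ) : ℂ) * coeff (p + 2) f
        + (l - ((m (p + 1) / m p : ℝ) : ℂ)) * coeff (p + 1) f := by
  simp only [laguerreOp, map_add, sub_mul, map_sub, coeff_C_mul, coeff_succ_X_mul, coeff_mderiv]
  ring

theorem coeff_add_two_of_laguerreOp_eq_zero (hm : ∀ p, m p ≠ 0) (hf : laguerreOp m c l f = 0)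
    (p : ℕ) (hden : ((m (p + 1) / m p : ℝ) : ℂ) + c ≠ 0) :
    coeff (p + 2) f =
      ((m (p + 1) / m (p + 2) : ℝ) : ℂ) *
        ((((m (p + 1) / m p : ℝ) : ℂ) - l) / (((m (p + 1) / m p : ℝ) : ℂ) + c)) *
          coeff (p + 1) f := by
  have h := coeff_succ_laguerreOp m c l f p
  rw [hf, map_zero] at h
  have hs : ((m (p + 2) / m (p + 1) : ℝ) : ℂ) ≠ 0 :=
    Complex.ofReal_ne_zero.mpr (div_ne_zero (hm _) (hm _))
  rw [← inv_div, Complex.ofReal_inv, eq_comm, inv_mul_eq_div, div_div, div_mul_eq_mul_div,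
    div_eq_iff (mul_ne_zero hden hs)]
  linear_combination h

end Coefficients

theorem stmt4_general (m : ℕ → ℝ) (hm : ∀ p, 0 < m p)
    (α : ℝ) (hα : -1 < α) (n : ℕ) (hn : 1 ≤ n)
    (a : ℕ → ℂ) (y : PowerSeries ℂ)
    (hy : y = PowerSeries.mk fun p => a p / (m p : ℂ))
    (heq : (X : PowerSeries ℂ) * mderiv m (mderiv m y)
      + (C ((α : ℂ) + 1) - X) * mderiv m y
      + C ((m n / m (n - 1) : ℝ) : ℂ) * y = 0) :
    ((α : ℂ) + 1) * a 1 = -((m n / m (n - 1) : ℝ) : ℂ) * a 0 ∧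
    (∀ p : ℕ, 1 ≤ p →
      a (p + 1) / (m (p + 1) : ℂ) =
        ((m p / m (p + 1) : ℝ) : ℂ) *
          (((m p / m (p - 1) - m n / m (n - 1) : ℝ) : ℂ) /
            ((m p / m (p - 1) + α + 1 : ℝ) : ℂ)) * (a p / (m p : ℂ))) ∧
    (∀ j, n + 1 ≤ j → a j = 0) := by
  have hm' : ∀ p, (m p : ℂ) ≠ 0 := fun p => Complex.ofReal_ne_zero.mpr (hm p).ne'
  have hcoeff : ∀ p, coeff p y = a p / (m p : ℂ) := by simp [hy]
  have hL : laguerreOp m ((α : ℂ) + 1) ((m n / m (n - 1) : ℝ) : ℂ) y = 0 := heq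
  have hrec : ∀ p : ℕ, 1 ≤ p →
      a (p + 1) / (m (p + 1) : ℂ) =
        ((m p / m (p + 1) : ℝ) : ℂ) *
          (((m p / m (p - 1) - m n / m (n - 1) : ℝ) : ℂ) /
            ((m p / m (p - 1) + α + 1 : ℝ) : ℂ)) * (a p / (m p : ℂ)) := by
    intro p hp
    obtain ⟨j, rfl⟩ := Nat.exists_eq_add_of_le' hp
    have hden : (0 : ℝ) < m (j + 1) / m j + (α + 1) := by linarith [div_pos (hm (j + 1)) (hm j)]
    have h := coeff_add_two_of_laguerreOp_eq_zero m _ _ y (fun p => (hm p).ne') hL j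
      (by exact_mod_cast hden.ne')
    rw [hcoeff, hcoeff] at h
    rw [Nat.add_sub_cancel, h]
    push_cast
    ring
  refine ⟨?_, hrec, ?_⟩
  · have h := congrArg (coeff 0) hL
    rw [coeff_zero_laguerreOp, map_zero, hcoeff, hcoeff, Complex.ofReal_div] at h
    field_simp [hm' 0, hm' 1] at h
    linear_combination h
  · intro j hj
    suffices a j / (m j : ℂ) = 0 from (div_eq_zero_iff.mp this).resolve_right (hm' j)
    induction j, hj using Nat.le_induction with
    | base => rw [hrec n hn, sub_self, Complex.ofReal_zero, zero_div, mul_zero, zero_mul]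
    | succ k hk ih => rw [hrec k (by omega), ih, mul_zero]

/-- Any formal power series solution of the generalized Laguerre moment equation satisfies the
stated recurrence, and is in fact a polynomial of degree at most `n`. -/
theorem stmt4 (m : ℕ → ℝ) (hm : ∀ p, 0 < m p) (hm0 : m 0 = 1)
    (α : ℝ) (hα : -1 < α) (n : ℕ) (hn : 1 ≤ n)
    (hne : ∀ j, 1 ≤ j → j ≤ n - 1 → m j / m (j - 1) ≠ m n / m (n - 1))
    (a : ℕ → ℂ) (y : PowerSeries ℂ)
    (hy : y = PowerSeries.mk fun p => a p / (m p : ℂ))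
    (heq : (X : PowerSeries ℂ) * mderiv m (mderiv m y)
      + (C ((α : ℂ) + 1) - X) * mderiv m y
      + C ((m n / m (n - 1) : ℝ) : ℂ) * y = 0) :
    ((α : ℂ) + 1) * a 1 = -((m n / m (n - 1) : ℝ) : ℂ) * a 0 ∧
    (∀ p : ℕ, 1 ≤ p →
      a (p + 1) / (m (p + 1) : ℂ) =
        ((m p / m (p + 1) : ℝ) : ℂ) *
          (((m p / m (p - 1) - m n / m (n - 1) : ℝ) : ℂ) /
            ((m p / m (p - 1) + α + 1 : ℝ) : ℂ)) * (a p / (m p : ℂ))) ∧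
    (∀ j, n + 1 ≤ j → a j = 0) :=
  stmt4_general m hm α hα n hn a y hy heq
end

section
/- Let n ≥ 1 be odd and λ_n^H = 2m(n)/m(n−1). Then the polynomial y(x) = ∑_{k=0}^{(n−1)/2} (a_{2k+1}/m(2k+1)) x^{2k+1}, with a_1 = 1 and a_{2k+1} = (m(2k+1)/m(1)) ∏_{j=0}^{k−1} ( m(2j+1)(2m(2j+1)/m(2j) − λ_n^H) / m(2j+3) ) for k ≥ 1, is an odd polynomial solving ∂_m² y − 2x ∂_m y + λ_n^H y = 0. -/
/-!
Normalize `y = ∑ₚ aₚ xᵖ / m(p)`. Then `∂_m` merely shifts the sequence `a`, so the equation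
becomes the two-step recurrence `a_{p+2} = (2 m(p)/m(p-1) - λ) aₚ`. The product formula for
`a_{2k+1}` telescopes to exactly this recurrence, and `λ = 2 m(n)/m(n-1)` makes the factor at
`p = n` vanish, which is what allows the series to stop at degree `n`.
-/

open PowerSeries Finset

noncomputable def mseries (m : ℕ → ℝ) (a : ℕ → ℝ) : PowerSeries ℂ :=
  PowerSeries.mk fun p => ((a p / m p : ℝ) : ℂ)

section MomentSequence

variable {m : ℕ → ℝ}

theorem mderiv_mseries (hm : ∀ p, m p ≠ 0) (a : ℕ → ℝ) :
    mderiv m (mseries m a) = mseries m fun p => a (p + 1) := by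
  ext p
  simp only [mderiv, mseries, coeff_mk, ← Complex.ofReal_mul]
  congr 1
  field_simp [hm p, hm (p + 1)]

-- `h0` is the `p = 0` case of the recurrence, where `x ∂_m y` has no coefficient to contribute.
theorem mderiv_hermite_mseries_eq_zero (hm : ∀ p, m p ≠ 0) (lam : ℝ) (a : ℕ → ℝ)
    (h0 : a 2 = -lam * a 0)
    (hsucc : ∀ p, a (p + 3) = (2 * m (p + 1) / m p - lam) * a (p + 1)) :
    mderiv m (mderiv m (mseries m a)) - 2 * (X : PowerSeries ℂ) * mderiv m (mseries m a)
        + C (lam : ℂ) * mseries m a = 0 := by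
  rw [mderiv_mseries hm, mderiv_mseries hm, mul_assoc]
  ext p
  rcases p with _ | p
  · simp only [mseries, map_add, map_sub, coeff_mk, coeff_zero_eq_constantCoeff, map_mul,
      constantCoeff_X, zero_mul, mul_zero, coeff_C_mul, map_zero, sub_zero]
    rw [h0]
    push_cast
    ring
  · simp only [mseries, map_add, map_sub, coeff_mk, coeff_succ_X_mul, coeff_C_mul, map_zero,
      show (2 : PowerSeries ℂ) = C 2 from (map_ofNat C 2).symm]
    rw [hsucc]
    push_cast
    field_simp [hm p, hm (p + 1)]
    ring

theorem prod_range_div_odd_succ (hm : ∀ p, m p ≠ 0) (k : ℕ) :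
    ∏ j ∈ range k, m (2 * j + 1) / m (2 * j + 3) = m 1 / m (2 * k + 1) := by
  induction k with
  | zero => simp [div_self (hm 1)]
  | succ k ih =>
    rw [prod_range_succ, ih]
    field_simp [hm (2 * k + 1)]
    ring_nf

theorem div_mul_prod_Icc_eq_prod_range (hm : ∀ p, m p ≠ 0) (r : ℕ → ℝ)
    {k : ℕ} (hk : 1 ≤ k) :
    m (2 * k + 1) / m 1 * ∏ j ∈ Icc 0 (k - 1), (m (2 * j + 1) * r j / m (2 * j + 3))
      = ∏ j ∈ range k, r j := by
  have hIcc : Icc 0 (k - 1) = range k := by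
    ext j
    simp only [mem_Icc, mem_range]
    omega
  simp_rw [hIcc, mul_div_right_comm _ (r _), prod_mul_distrib, prod_range_div_odd_succ hm]
  field_simp [hm 1, hm (2 * k + 1)]

end MomentSequence

def oddTrunc (n : ℕ) (b : ℕ → ℝ) (p : ℕ) : ℝ :=
  if p % 2 = 1 ∧ p ≤ n then b (p / 2) else 0

theorem oddTrunc_add_two {n : ℕ} (hodd : Odd n) {s b : ℕ → ℝ} (hs : s n = 0)
    (hb : ∀ k, b (k + 1) = s (2 * k + 1) * b k) (q : ℕ) :
    oddTrunc n b (q + 2) = s q * oddTrunc n b q := by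
  obtain ⟨n, rfl⟩ := hodd
  unfold oddTrunc
  rcases Nat.even_or_odd' q with ⟨k, rfl | rfl⟩
  · simp
  · by_cases hkn : k + 1 ≤ n
    · rw [if_pos (by omega), if_pos (by omega), show (2 * k + 1 + 2) / 2 = k + 1 by omega,
        show (2 * k + 1) / 2 = k by omega, hb]
    · rw [if_neg (by omega)]
      by_cases hkn' : k = n
      · rw [hkn', hs, zero_mul]
      · rw [if_neg (by omega), mul_zero]

theorem stmt7_general (m : ℕ → ℝ) (hm : ∀ p, 0 < m p)
    (n : ℕ) (hodd : Odd n)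
    (b : ℕ → ℝ) (hb0 : b 0 = 1)
    (hbk : ∀ k, 1 ≤ k → b k =
      (m (2 * k + 1) / m 1) *
        ∏ j ∈ Finset.Icc 0 (k - 1),
          (m (2 * j + 1) * (2 * m (2 * j + 1) / m (2 * j) - 2 * m n / m (n - 1)) / m (2 * j + 3)))
    (y : PowerSeries ℂ)
    (hy : y = PowerSeries.mk fun p =>
      if p % 2 = 1 ∧ p ≤ n then ((b (p / 2) / m p : ℝ) : ℂ) else 0) :
    mderiv m (mderiv m y) - 2 * (X : PowerSeries ℂ) * mderiv m y
        + C ((2 * m n / m (n - 1) : ℝ) : ℂ) * y = 0 ∧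
    (∀ p, Even p → PowerSeries.coeff p y = 0) := by
  have hm₀ : ∀ p, m p ≠ 0 := fun p => (hm p).ne'
  set lam := 2 * m n / m (n - 1)
  set s : ℕ → ℝ := fun q => 2 * m q / m (q - 1) - lam
  have hb : ∀ k, b (k + 1) = s (2 * k + 1) * b k := by
    have hprod : ∀ k, b k = ∏ j ∈ range k, s (2 * j + 1) := fun k => by
      rcases Nat.eq_zero_or_pos k with rfl | hk
      · simpa using hb0
      · exact (hbk k hk).trans (div_mul_prod_Icc_eq_prod_range hm₀ _ hk)
    intro k
    rw [hprod, hprod, prod_range_succ, mul_comm]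
  have hys : y = mseries m (oddTrunc n b) := by
    rw [hy]
    ext p
    simp only [mseries, oddTrunc, coeff_mk]
    split_ifs <;> simp
  have hrec := oddTrunc_add_two hodd (s := s) (by simp [s, lam]) hb
  refine ⟨?_, fun p hp => ?_⟩
  · rw [hys]
    refine mderiv_hermite_mseries_eq_zero hm₀ lam _ ?_ fun p => hrec (p + 1)
    simp [oddTrunc]
  · rw [hys, mseries, coeff_mk, oddTrunc, if_neg (by rw [Nat.even_iff] at hp; omega)]
    simp

/-- For odd `n ≥ 1`, the odd generalized Hermite polynomial solves
`∂_m² y - 2x ∂_m y + λ_n^H y = 0`, `λ_n^H = 2 m(n)/m(n-1)`. -/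
theorem stmt7 (m : ℕ → ℝ) (hm : ∀ p, 0 < m p) (hm0 : m 0 = 1)
    (n : ℕ) (hn : 1 ≤ n) (hodd : Odd n)
    (b : ℕ → ℝ) (hb0 : b 0 = 1)
    (hbk : ∀ k, 1 ≤ k → b k =
      (m (2 * k + 1) / m 1) *
        ∏ j ∈ Finset.Icc 0 (k - 1),
          (m (2 * j + 1) * (2 * m (2 * j + 1) / m (2 * j) - 2 * m n / m (n - 1)) / m (2 * j + 3)))
    (y : PowerSeries ℂ)
    (hy : y = PowerSeries.mk fun p =>
      if p % 2 = 1 ∧ p ≤ n then ((b (p / 2) / m p : ℝ) : ℂ) else 0) :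
    mderiv m (mderiv m y) - 2 * (X : PowerSeries ℂ) * mderiv m y
        + C ((2 * m n / m (n - 1) : ℝ) : ℂ) * y = 0 ∧
    (∀ p, Even p → PowerSeries.coeff p y = 0) :=
  stmt7_general m hm n hodd b hb0 hbk y hy
end
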